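/- For m ≥ 2 and n ≥ 1 with base m expansion n = Σ_{i≥ℓ} α_i·m^i, where ℓ is the position of the lowest nonzero digit: if ℓ = 1 (i.e., α_0 = 0 and α_1 > 0), then c_m(mn) ≡ 1 − α_1 − (α_1 − 1)·Σ_{i=2}^{∞} α_2·α_3···α_i (mod m). -/

import Mathlib

open Finset Finsupp

noncomputable def cm (m n : ℕ) : ℕ :=
  Nat.card {f : ℕ →₀ ℕ // (∑ i ∈ f.support, f i * m ^ i = n) ∧
    ∀ i k, f i ≠ 0 → k ≤ i → f k ≠ 0}

def Pset (m N : ℕ) : Set (ℕ →₀ ℕ) :=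
  {f | (∑ i ∈ f.support, f i * m ^ i = N) ∧ ∀ i k, f i ≠ 0 → k ≤ i → f k ≠ 0}

lemma cm_eq (m N : ℕ) : cm m N = Nat.card (Pset m N) := rfl

lemma Pset_sum {m N : ℕ} {f : ℕ →₀ ℕ} (hf : f ∈ Pset m N) :
    (f.sum fun i v => v * m ^ i) = N := hf.1

lemma Pset_bounds {m N : ℕ} (hm : 2 ≤ m) {f : ℕ →₀ ℕ} (hf : f ∈ Pset m N) (i : ℕ) :
    f i ≤ N ∧ (f i ≠ 0 → i < N + 1) := by
  rcases eq_or_ne (f i) 0 with h | h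
  · simp [h]
  have hi : i ∈ f.support := Finsupp.mem_support_iff.2 h
  have hle : f i * m ^ i ≤ N := by
    rw [← hf.1]
    exact Finset.single_le_sum (f := fun i => f i * m ^ i) (fun _ _ => Nat.zero_le _) hi
  constructor
  · calc f i ≤ f i * m ^ i := Nat.le_mul_of_pos_right _ (Nat.pow_pos (by omega))
    _ ≤ N := hle
  · intro _
    have h1 : m ^ i ≤ N := le_trans (Nat.le_mul_of_pos_left _ (Nat.pos_of_ne_zero h)) hle
    have h2 : i < m ^ i := Nat.lt_pow_self (by omega)
    omega

lemma Pset_finite {m : ℕ} (hm : 2 ≤ m) (N : ℕ) : (Pset m N).Finite := by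
  apply Set.Finite.subset (Finset.finite_toSet ((Finset.range (N+1)).finsupp
    (fun _ => Finset.range (N+1))))
  intro f hf
  rw [Finset.mem_coe, Finset.mem_finsupp_iff]
  constructor
  · intro i hi
    exact Finset.mem_range.2 ((Pset_bounds hm hf i).2 (Finsupp.mem_support_iff.1 hi))
  · intro i _
    exact Finset.mem_range.2 (Nat.lt_succ_of_le (Pset_bounds hm hf i).1)

noncomputable def shiftDown (f : ℕ →₀ ℕ) : ℕ →₀ ℕ :=
  f.comapDomain Nat.succ (Nat.succ_injective.injOn)

@[simp] lemma shiftDown_apply (f : ℕ →₀ ℕ) (i : ℕ) : shiftDown f i = f (i + 1) := rfl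

noncomputable def shiftUp (a : ℕ) (g : ℕ →₀ ℕ) : ℕ →₀ ℕ :=
  Finsupp.single 0 a + Finsupp.mapDomain Nat.succ g

@[simp] lemma shiftUp_zero (a : ℕ) (g : ℕ →₀ ℕ) : shiftUp a g 0 = a := by
  have h0 : (0 : ℕ) ∉ Set.range Nat.succ := by simp [Nat.succ_ne_zero]
  simp [shiftUp, Finsupp.mapDomain_notin_range _ _ h0]

@[simp] lemma shiftUp_succ (a : ℕ) (g : ℕ →₀ ℕ) (i : ℕ) : shiftUp a g (i + 1) = g i := by
  simp [shiftUp, Finsupp.single_apply,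
    Finsupp.mapDomain_apply Nat.succ_injective g i]

lemma shiftUp_shiftDown (f : ℕ →₀ ℕ) : shiftUp (f 0) (shiftDown f) = f := by
  ext i
  cases i with
  | zero => simp
  | succ i => simp

lemma shiftDown_shiftUp (a : ℕ) (g : ℕ →₀ ℕ) : shiftDown (shiftUp a g) = g := by
  ext i; simp

lemma sum_shiftUp (m a : ℕ) (g : ℕ →₀ ℕ) :
    ((shiftUp a g).sum fun i v => v * m ^ i) = a + m * (g.sum fun i v => v * m ^ i) := by
  rw [shiftUp, Finsupp.sum_add_index' (h := fun i v => v * m ^ i) (fun i => zero_mul _)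
      (fun i x y => add_mul x y _),
    Finsupp.sum_single_index (h := fun i v => v * m ^ i) (zero_mul _),
    Finsupp.sum_mapDomain_index (h := fun i v => v * m ^ i) (fun i => zero_mul _) (fun i x y => add_mul x y _),
    Finsupp.mul_sum]
  congr 1
  · simp
  · apply Finsupp.sum_congr
    intro i _
    rw [Nat.succ_eq_add_one, pow_succ]
    ring

lemma Pset_decomp {m N : ℕ} {f : ℕ →₀ ℕ} (hf : f ∈ Pset m N) :
    N = f 0 + m * ((shiftDown f).sum fun i v => v * m ^ i) := by
  conv_lhs => rw [← hf.1]
  show (f.sum fun i v => v * m ^ i) = _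
  conv_lhs => rw [← shiftUp_shiftDown f]
  exact sum_shiftUp m (f 0) (shiftDown f)

lemma Pset_f0_mod {m N : ℕ} {f : ℕ →₀ ℕ} (hf : f ∈ Pset m N) : f 0 % m = N % m := by
  rw [Pset_decomp hf, Nat.add_mul_mod_self_left]

lemma Pset_f0_pos {m N : ℕ} (hN : 1 ≤ N) {f : ℕ →₀ ℕ} (hf : f ∈ Pset m N) : 0 < f 0 := by
  by_contra h
  have h0 : f 0 = 0 := by omega
  have hz : f = 0 := by
    ext i
    by_contra hi
    exact (hf.2 i 0 hi (Nat.zero_le i)) h0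
  have := hf.1
  rw [hz] at this
  simp at this
  omega

lemma shiftDown_mem {m N : ℕ} (hm : 2 ≤ m) {f : ℕ →₀ ℕ} (hf : f ∈ Pset m N) :
    shiftDown f ∈ Pset m ((N - f 0) / m) := by
  constructor
  · show ((shiftDown f).sum fun i v => v * m ^ i) = _
    have := Pset_decomp hf
    rw [this, Nat.add_sub_cancel_left, Nat.mul_div_cancel_left _ (by omega : 0 < m)]
  · intro i k hi hk
    exact hf.2 (i + 1) (k + 1) (by simpa using hi) (by omega)

lemma shiftUp_mem {m M a : ℕ} (ha : 1 ≤ a) {g : ℕ →₀ ℕ} (hg : g ∈ Pset m M) :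
    shiftUp a g ∈ Pset m (a + m * M) := by
  constructor
  · show ((shiftUp a g).sum fun i v => v * m ^ i) = _
    rw [sum_shiftUp]
    have h := hg.1
    show a + m * (∑ i ∈ g.support, g i * m ^ i) = a + m * M
    rw [h]
  · intro i k hi hk
    cases k with
    | zero => simp; omega
    | succ k =>
      cases i with
      | zero => omega
      | succ i =>
        simp only [shiftUp_succ] at hi ⊢
        exact hg.2 i k (by simpa using hi) (by omega)

lemma fiber_card {m : ℕ} (hm : 2 ≤ m) {N a : ℕ} (ha1 : 1 ≤ a) (haN : a ≤ N)
    (hdvd : m ∣ N - a) :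
    (((Pset_finite hm N).toFinset).filter (fun f => f 0 = a)).card = cm m ((N - a) / m) := by
  classical
  rw [cm_eq, Nat.card_coe_set_eq, Set.ncard_eq_toFinset_card _ (Pset_finite hm _)]
  apply Finset.card_nbij' shiftDown (shiftUp a)
  · intro f hf
    simp only [Finset.mem_coe, Finset.mem_filter, Set.Finite.mem_toFinset] at hf ⊢
    have := shiftDown_mem hm hf.1
    rwa [hf.2] at this
  · intro g hg
    simp only [Finset.mem_coe, Finset.mem_filter, Set.Finite.mem_toFinset] at hg ⊢
    have := shiftUp_mem ha1 hg
    have heq : a + m * ((N - a) / m) = N := by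
      rw [Nat.mul_div_cancel' hdvd]; omega
    rw [heq] at this
    exact ⟨this, shiftUp_zero a g⟩
  · intro f hf
    simp only [Finset.mem_coe, Finset.mem_filter] at hf
    rw [← hf.2]
    exact shiftUp_shiftDown f
  · intro g _
    exact shiftDown_shiftUp a g

lemma cm_rec {m : ℕ} (hm : 2 ≤ m) {N : ℕ} (hN : 1 ≤ N) :
    cm m N = ∑ b ∈ Finset.range (N / m + 1),
      if N % m = 0 ∧ b = 0 then 0 else cm m (N / m - b) := by
  classical
  rw [cm_eq, Nat.card_coe_set_eq, Set.ncard_eq_toFinset_card _ (Pset_finite hm _)]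
  rw [Finset.card_eq_sum_card_fiberwise (f := fun f => f 0 / m)
    (t := Finset.range (N / m + 1)) (fun f hf => by
      simp only [Finset.mem_coe, Set.Finite.mem_toFinset] at hf
      exact Finset.mem_range.2 (Nat.lt_succ_of_le
        (Nat.div_le_div_right (Pset_bounds hm hf 0).1)))]
  refine Finset.sum_congr rfl (fun b hb => ?_)
  by_cases hcase : N % m = 0 ∧ b = 0
  · rw [if_pos hcase]
    rw [Finset.card_eq_zero, Finset.filter_eq_empty_iff]
    intro f hf
    simp only [Set.Finite.mem_toFinset] at hf
    intro hfb
    have h1 : f 0 % m = N % m := Pset_f0_mod hf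
    have h2 : 0 < f 0 := Pset_f0_pos hN hf
    have h3 : f 0 = m * (f 0 / m) + f 0 % m := (Nat.div_add_mod _ _).symm
    rw [hfb, hcase.2] at h3
    have := hcase.1
    omega
  · rw [if_neg hcase]
    have hb' : b ≤ N / m := Nat.lt_succ_iff.1 (Finset.mem_range.1 hb)
    set a := N % m + m * b with ha_def
    have hNd : N = m * (N / m) + N % m := (Nat.div_add_mod _ _).symm
    have hmul : m * (N / m - b) + m * b = m * (N / m) := by
      rw [← Nat.mul_add]; congr 1; omega
    have ha1 : 1 ≤ a := by
      rcases Nat.eq_zero_or_pos (N % m) with h | h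
      · have hb0 : b ≠ 0 := fun hb0 => hcase ⟨h, hb0⟩
        have : 1 * 1 ≤ m * b := Nat.mul_le_mul (by omega) (by omega)
        omega
      · omega
    have haN : a ≤ N := by
      have : m * b ≤ m * (N / m) := Nat.mul_le_mul_left m hb'
      omega
    have hsub : N - a = m * (N / m - b) := by omega
    have hdvd : m ∣ N - a := ⟨N / m - b, hsub⟩
    have hdiv : (N - a) / m = N / m - b := by
      rw [hsub, Nat.mul_div_cancel_left _ (by omega : 0 < m)]
    have hfilter : Finset.filter (fun f => f 0 / m = b) (Pset_finite hm N).toFinset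
        = Finset.filter (fun f => f 0 = a) (Pset_finite hm N).toFinset := by
      apply Finset.filter_congr
      intro f hf
      simp only [Set.Finite.mem_toFinset] at hf
      have h1 : f 0 % m = N % m := Pset_f0_mod hf
      have h2 : f 0 = m * (f 0 / m) + f 0 % m := (Nat.div_add_mod _ _).symm
      constructor
      · intro h
        rw [ha_def, ← h]
        omega
      · intro h
        have : f 0 / m = b := by
          rw [h, ha_def, Nat.add_mul_div_left _ _ (by omega : 0 < m),
            Nat.div_eq_of_lt (Nat.mod_lt _ (by omega))]
          omega
        omega
    rw [hfilter, fiber_card hm ha1 haN hdvd, hdiv]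

lemma cm_zero (m : ℕ) : cm m 0 = 1 := by
  have hset : Pset m 0 = {0} := by
    ext f
    constructor
    · intro hf
      simp only [Set.mem_singleton_iff]
      by_contra hne
      obtain ⟨i, hi⟩ : ∃ i, f i ≠ 0 := by
        by_contra h
        push_neg at h
        exact hne (Finsupp.ext h)
      have h0 : f 0 ≠ 0 := hf.2 i 0 hi (Nat.zero_le i)
      have hmem : (0 : ℕ) ∈ f.support := Finsupp.mem_support_iff.2 h0
      have hle : f 0 * m ^ 0 ≤ ∑ i ∈ f.support, f i * m ^ i :=
        Finset.single_le_sum (f := fun i => f i * m ^ i)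
          (fun _ _ => Nat.zero_le _) hmem
      rw [hf.1] at hle
      have this : f 0 = 0 := by simpa using hle
      exact h0 this
    · rintro rfl
      exact ⟨by simp, fun i k hi => absurd rfl hi⟩
  rw [cm_eq, hset, Nat.card_coe_set_eq, Set.ncard_singleton]

lemma cm_rec_A {m : ℕ} (hm : 2 ≤ m) (M r : ℕ) (hr : 0 < r) (hrm : r < m) :
    cm m (m * M + r) = ∑ k ∈ Finset.range (M + 1), cm m k := by
  have hN : 1 ≤ m * M + r := by omega
  rw [cm_rec hm hN]
  have hmod : (m * M + r) % m = r := by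
    rw [Nat.mul_add_mod]
    exact Nat.mod_eq_of_lt hrm
  have hdivq : (m * M + r) / m = M := by
    rw [Nat.mul_add_div (by omega), Nat.div_eq_of_lt hrm]
    omega
  rw [hmod, hdivq]
  have : ∀ b ∈ Finset.range (M + 1),
      (if r = 0 ∧ b = 0 then 0 else cm m (M - b)) = cm m (M - b) := by
    intro b _
    rw [if_neg (by omega)]
  rw [Finset.sum_congr rfl this]
  have := Finset.sum_range_reflect (fun k => cm m k) (M + 1)
  rw [← this]
  apply Finset.sum_congr rfl
  intro b hb
  congr 1

lemma cm_rec_B {m : ℕ} (hm : 2 ≤ m) (M : ℕ) (hM : 1 ≤ M) :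
    cm m (m * M) = ∑ k ∈ Finset.range M, cm m k := by
  have hN : 1 ≤ m * M := by
    have : 1 * 1 ≤ m * M := Nat.mul_le_mul (by omega) hM
    omega
  rw [cm_rec hm hN]
  have hmod : (m * M) % m = 0 := by simp
  have hdivq : (m * M) / m = M := by
    rw [Nat.mul_div_cancel_left _ (by omega : 0 < m)]
  rw [hmod, hdivq]
  have h2 : (∑ b ∈ Finset.range (M + 1), if 0 = 0 ∧ b = 0 then 0 else cm m (M - b))
      = ∑ b ∈ Finset.range M, cm m (M - 1 - b) := by
    rw [Finset.sum_range_succ']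
    have hstep : ∀ b ∈ Finset.range M,
        (if 0 = 0 ∧ b + 1 = 0 then 0 else cm m (M - (b + 1))) = cm m (M - 1 - b) := by
      intro b _
      rw [if_neg (by omega)]
      congr 1
      omega
    rw [Finset.sum_congr rfl hstep]
    simp
  rw [h2, Finset.sum_range_reflect]

noncomputable def Tz (m M : ℕ) : ZMod m := ∑ k ∈ Finset.range M, (cm m k : ZMod m)

lemma Tz_zero (m : ℕ) : Tz m 0 = 0 := by simp [Tz]

lemma Tz_succ (m M : ℕ) : Tz m (M + 1) = Tz m M + (cm m M : ZMod m) := by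
  simp [Tz, Finset.sum_range_succ]

lemma Tz_one (m : ℕ) : Tz m 1 = 1 := by
  simp [Tz, cm_zero]

lemma cm_small {m : ℕ} (hm : 2 ≤ m) {k : ℕ} (h1 : 1 ≤ k) (h2 : k < m) : cm m k = 1 := by
  have := cm_rec_A hm 0 k h1 h2
  simpa [cm_zero] using this

lemma Tz_small {m : ℕ} (hm : 2 ≤ m) {k : ℕ} (hk : k ≤ m) : Tz m k = (k : ZMod m) := by
  induction k with
  | zero => simp [Tz_zero]
  | succ k ih =>
    rw [Tz_succ, ih (by omega)]
    rcases Nat.eq_zero_or_pos k with h | h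
    · subst h; simp [cm_zero]
    · rw [cm_small hm h (by omega)]
      push_cast
      ring

lemma cast_cm_A {m : ℕ} (hm : 2 ≤ m) (M r : ℕ) (hr : 0 < r) (hrm : r < m) :
    (cm m (m * M + r) : ZMod m) = Tz m (M + 1) := by
  rw [cm_rec_A hm M r hr hrm, Tz]
  push_cast
  rfl

lemma cast_cm_B {m : ℕ} (hm : 2 ≤ m) (M : ℕ) (hM : 1 ≤ M) :
    (cm m (m * M) : ZMod m) = Tz m M := by
  rw [cm_rec_B hm M hM, Tz]
  push_cast
  rfl

lemma block_sum {m : ℕ} (hm : 2 ≤ m) (Q : ℕ) (hQ : 1 ≤ Q) :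
    ∑ x ∈ Finset.range m, (cm m (m * Q + x) : ZMod m) = Tz m Q - Tz m (Q + 1) := by
  obtain ⟨m', rfl⟩ : ∃ m', m = m' + 1 := ⟨m - 1, by omega⟩
  rw [Finset.sum_range_succ']
  have hstep : ∀ x ∈ Finset.range m',
      (cm (m' + 1) ((m' + 1) * Q + (x + 1)) : ZMod (m' + 1)) = Tz (m' + 1) (Q + 1) := by
    intro x hx
    have hx' := Finset.mem_range.1 hx
    exact cast_cm_A hm Q (x + 1) (by omega) (by omega)
  rw [Finset.sum_congr rfl hstep, Finset.sum_const]
  norm_num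
  rw [cast_cm_B hm Q hQ]
  have hcast : ((m' : ℕ) : ZMod (m' + 1)) = -1 := by
    have h2 : ((m' + 1 : ℕ) : ZMod (m' + 1)) = 0 := ZMod.natCast_self _
    push_cast at h2 ⊢
    linear_combination h2
  rw [hcast]
  ring

lemma L1 {m : ℕ} (hm : 2 ≤ m) (Q : ℕ) (hQ : 1 ≤ Q) :
    Tz m (m * Q) = 1 - Tz m Q := by
  induction Q with
  | zero => omega
  | succ Q ih =>
    rcases Nat.eq_zero_or_pos Q with h | h
    · subst h
      rw [Nat.mul_one, Tz_small hm (le_refl m), ZMod.natCast_self, Tz_one]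
      ring
    · have hmul : m * (Q + 1) = m * Q + m := by ring
      rw [hmul, Tz, Finset.sum_range_add, ← Tz]
      rw [ih h]
      have : ∑ x ∈ Finset.range m, (cm m (m * Q + x) : ZMod m) = Tz m Q - Tz m (Q + 1) :=
        block_sum hm Q h
      rw [this]
      ring

lemma L3 {m : ℕ} (hm : 2 ≤ m) (a R : ℕ) (ha1 : 1 ≤ a) (ham : a ≤ m) :
    Tz m (m * R + a) = 1 + ((a : ZMod m) - 1) * Tz m (R + 1) := by
  rcases Nat.eq_zero_or_pos R with h | h
  · subst h
    rw [Nat.mul_zero, Nat.zero_add, Tz_small hm ham, Tz_one]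
    ring
  · obtain ⟨a', rfl⟩ : ∃ a', a = a' + 1 := ⟨a - 1, by omega⟩
    rw [Tz, Finset.sum_range_add, ← Tz, L1 hm R h, Finset.sum_range_succ']
    have hstep : ∀ x ∈ Finset.range a',
        (cm m (m * R + (x + 1)) : ZMod m) = Tz m (R + 1) := by
      intro x hx
      have hx' := Finset.mem_range.1 hx
      exact cast_cm_A hm R (x + 1) (by omega) (by omega)
    rw [Finset.sum_congr rfl hstep, Finset.sum_const]
    norm_num
    rw [cast_cm_B hm R h]
    push_cast
    ring

lemma L4 {m : ℕ} (hm : 2 ≤ m) :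
    ∀ (L : ℕ) (β : ℕ → ℕ), (∀ i, i < L → β i < m) →
      Tz m ((∑ i ∈ Finset.range L, β i * m ^ i) + 1)
        = 1 + ∑ i ∈ Finset.range L, ∏ t ∈ Finset.range (i + 1), (β t : ZMod m) := by
  intro L
  induction L with
  | zero => intro β _; simp [Tz_one]
  | succ L ih =>
    intro β hβ
    have hR : (∑ i ∈ Finset.range (L + 1), β i * m ^ i)
        = m * (∑ i ∈ Finset.range L, β (i + 1) * m ^ i) + β 0 := by
      rw [Finset.sum_range_succ', Finset.mul_sum]
      congr 1
      · apply Finset.sum_congr rfl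
        intro i _
        rw [pow_succ]
        ring
      · simp
    rw [hR, add_assoc,
      L3 hm (β 0 + 1) _ (by omega) (by have := hβ 0 (by omega); omega),
      ih (fun i => β (i + 1)) (fun i hi => hβ (i + 1) (by omega)),
      Finset.sum_range_succ' (fun i => ∏ t ∈ Finset.range (i + 1), (β t : ZMod m)) L]
    have hprod : ∀ i ∈ Finset.range L,
        (∏ t ∈ Finset.range (i + 1 + 1), (β t : ZMod m))
          = (∏ t ∈ Finset.range (i + 1), (β (t + 1) : ZMod m)) * (β 0 : ZMod m) := by
      intro i _
      exact Finset.prod_range_succ' _ _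
    rw [Finset.sum_congr rfl hprod, ← Finset.sum_mul, Finset.prod_range_one]
    push_cast
    ring

theorem cm_congruence_ell_one (m n j : ℕ) (α : ℕ → ℕ) (hm : 2 ≤ m) (hj : 0 < α j) (hd : ∀ i, i ≤ j → α i < m)
    (hn : n = ∑ i ∈ Finset.range (j + 1), α i * m ^ i)
    (hz : ∀ i, j < i → α i = 0) (h0 : α 0 = 0) (h1 : 0 < α 1) :
    (cm m (m * n) : ℤ) ≡ 1 - (α 1 : ℤ) - ((α 1 : ℤ) - 1) *
      ∑ i ∈ Finset.Icc 2 j, ∏ t ∈ Finset.Icc 2 i, (α t : ℤ) [ZMOD (m : ℤ)] := by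
  have hj1 : 1 ≤ j := by
    rcases Nat.eq_zero_or_pos j with h | h
    · rw [h, h0] at hj; omega
    · exact h
  obtain ⟨j', rfl⟩ : ∃ j', j = j' + 1 := ⟨j - 1, by omega⟩
  set Q := ∑ i ∈ Finset.range (j' + 1), α (i + 1) * m ^ i with hQdef
  set R := ∑ i ∈ Finset.range j', α (i + 2) * m ^ i with hRdef
  have hnQ : n = m * Q := by
    rw [hn, Finset.sum_range_succ' (fun i => α i * m ^ i), h0, hQdef, Finset.mul_sum]
    simp only [Nat.zero_mul, Nat.add_zero]
    apply Finset.sum_congr rfl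
    intro i _
    rw [pow_succ]
    ring
  have hQ1 : 1 ≤ Q := by
    have hle : α (0 + 1) * m ^ 0 ≤ Q :=
      Finset.single_le_sum (f := fun i => α (i + 1) * m ^ i)
        (fun _ _ => Nat.zero_le _) (Finset.mem_range.2 (by omega))
    simp only [pow_zero, Nat.mul_one, Nat.zero_add] at hle
    omega
  have hQR : Q = m * R + α 1 := by
    rw [hQdef, Finset.sum_range_succ' (fun i => α (i + 1) * m ^ i), hRdef, Finset.mul_sum]
    simp only [pow_zero, Nat.mul_one, Nat.zero_add]
    congr 1
    apply Finset.sum_congr rfl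
    intro i _
    rw [pow_succ]
    ring
  have hα1m : α 1 ≤ m := le_of_lt (hd 1 (by omega))
  have hW := L4 hm j' (fun i => α (i + 2)) (fun i hi => hd (i + 2) (by omega))
  have hLHS : (cm m (m * n) : ZMod m)
      = 1 - (1 + ((α 1 : ZMod m) - 1) *
          (1 + ∑ i ∈ Finset.range j', ∏ t ∈ Finset.range (i + 1), (α (t + 2) : ZMod m))) := by
    have hmn : 1 ≤ m * Q := by
      have : 1 * 1 ≤ m * Q := Nat.mul_le_mul (by omega) hQ1
      omega
    have hW' : Tz m (R + 1) = 1 + ∑ i ∈ Finset.range j',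
        ∏ t ∈ Finset.range (i + 1), (α (t + 2) : ZMod m) := by
      rw [hRdef]
      exact hW
    rw [hnQ, cast_cm_B hm (m * Q) hmn, L1 hm Q hQ1, hQR,
      L3 hm (α 1) R h1 hα1m, hW']
  have hV : (∑ i ∈ Finset.Icc 2 (j' + 1), ∏ t ∈ Finset.Icc 2 i, (α t : ZMod m))
      = ∑ i ∈ Finset.range j', ∏ t ∈ Finset.range (i + 1), (α (t + 2) : ZMod m) := by
    rw [← Finset.Ico_add_one_right_eq_Icc, Finset.sum_Ico_eq_sum_range]
    apply Finset.sum_congr (by congr 1)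
    intro i _
    rw [← Finset.Ico_add_one_right_eq_Icc, Finset.prod_Ico_eq_prod_range]
    apply Finset.prod_congr (by congr 1; omega)
    intro t _
    rw [Nat.add_comm]
  rw [← ZMod.intCast_eq_intCast_iff]
  push_cast
  rw [hLHS, hV]
  ring
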